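/- arXiv:2405.13726 — 5 statements merged into one kernel-verified Lean document; each statement's English description precedes it below -/
import Mathlib

section
/- Let d ≥ 1, let A be a real d×d matrix, let α, β ∈ ℝ, and let λ ∈ ℝ with λ ≠ 0. Then det(T − λ·I_{2d}) = λ^d · det((λ + β/λ)·I_d − M). Consequently, a nonzero scalar λ is an eigenvalue of T if and only if λ + β/λ is an eigenvalue of M. -/
open Matrix

/-- For `λ ≠ 0`, `det (T - λ I_{2d}) = λ^d det ((λ + β/λ) I_d - M)`; consequently a nonzero
scalar `λ` is an eigenvalue of `T` iff `λ + β/λ` is an eigenvalue of `M`. -/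
theorem stmt2 {d : ℕ} (hd : 1 ≤ d) (A : Matrix (Fin d) (Fin d) ℝ) (α β lam : ℝ)
    (hlam : lam ≠ 0) :
    let M : Matrix (Fin d) (Fin d) ℝ :=
      (1 + β) • (1 : Matrix (Fin d) (Fin d) ℝ) - (α * (1 - β)) • A
    let T : Matrix (Fin d ⊕ Fin d) (Fin d ⊕ Fin d) ℝ :=
      Matrix.fromBlocks M (-(β • (1 : Matrix (Fin d) (Fin d) ℝ))) 1 0
    (T - lam • (1 : Matrix (Fin d ⊕ Fin d) (Fin d ⊕ Fin d) ℝ)).det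
        = lam ^ d * ((lam + β / lam) • (1 : Matrix (Fin d) (Fin d) ℝ) - M).det ∧
      ((T - lam • (1 : Matrix (Fin d ⊕ Fin d) (Fin d ⊕ Fin d) ℝ)).det = 0 ↔
        (M - (lam + β / lam) • (1 : Matrix (Fin d) (Fin d) ℝ)).det = 0) := by
  intro M T
  set D : Matrix (Fin d) (Fin d) ℝ := (-lam) • 1 with hD
  have hblock : T - lam • (1 : Matrix (Fin d ⊕ Fin d) (Fin d ⊕ Fin d) ℝ)
      = Matrix.fromBlocks (M - lam • 1) (-(β • 1)) 1 D := by
    ext i j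
    cases i <;> cases j <;>
      simp [T, D, Matrix.fromBlocks, Matrix.one_apply, Matrix.smul_apply, Matrix.sub_apply]
      <;> split <;> simp
  haveI : Invertible D := ⟨(-lam)⁻¹ • 1, by
      rw [hD, smul_mul_smul_comm, one_mul, inv_mul_cancel₀ (by simpa using hlam), one_smul], by
      rw [hD, smul_mul_smul_comm, one_mul, mul_inv_cancel₀ (by simpa using hlam), one_smul]⟩
  have hinv : ⅟D = (-lam)⁻¹ • 1 := invOf_eq_right_inv (by
      rw [hD, smul_mul_smul_comm, one_mul, mul_inv_cancel₀ (by simpa using hlam), one_smul])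
  have hschur : (M - lam • 1) - (-(β • (1:Matrix (Fin d) (Fin d) ℝ))) * ⅟D * 1
      = M - (lam + β / lam) • 1 := by
    rw [hinv, Matrix.mul_one, neg_mul, smul_mul_smul_comm, one_mul]
    have : -(β * (-lam)⁻¹) = β / lam := by field_simp
    rw [← neg_smul, this]
    module
  have key : (T - lam • (1 : Matrix (Fin d ⊕ Fin d) (Fin d ⊕ Fin d) ℝ)).det
      = (-lam) ^ d * (M - (lam + β / lam) • 1).det := by
    rw [hblock, Matrix.det_fromBlocks₂₂, hschur, hD, Matrix.det_smul, Matrix.det_one, mul_one]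
    simp
  have hflip : (M - (lam + β / lam) • (1:Matrix (Fin d) (Fin d) ℝ)).det
      = (-1 : ℝ) ^ d * ((lam + β / lam) • 1 - M).det := by
    rw [show M - (lam + β / lam) • (1:Matrix (Fin d) (Fin d) ℝ)
        = -((lam + β / lam) • 1 - M) by module, Matrix.det_neg, Fintype.card_fin]
  constructor
  · rw [key, hflip, ← mul_assoc, ← mul_pow]
    ring_nf
  · rw [key, mul_eq_zero]
    have : (-lam) ^ d ≠ 0 := pow_ne_zero _ (neg_ne_zero.mpr hlam)
    tauto
end

section
/- Let B be a real symmetric positive definite d×d matrix, let L > 0 be such that ⟨x, Bx⟩ ≤ L·‖x‖² for all x ∈ ℝ^d, let α ∈ (0, 2/L), and let β ∈ [0, 1). Then the d²×d² matrix I_d ⊗ B + B ⊗ I_d − α(1−β)²·(B ⊗ B) is symmetric positive definite; in particular it is invertible. -/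
open Matrix Kronecker
open scoped RealInnerProductSpace

/-!
Put `c = α (1 - β)²` and `A = 1 - (c/2) B`. Expanding the Kronecker products gives
`1 ⊗ B + B ⊗ 1 - c (B ⊗ B) = A ⊗ B + B ⊗ A`. Since `c < 2/L`, the bound `⟨x, Bx⟩ ≤ L ‖x‖²`
makes `A` positive definite, and Kronecker products and sums of positive definite matrices are
positive definite.
-/

theorem Matrix.one_sub_smul_kronecker_add_kronecker_one_sub_smul {R n : Type*} [CommRing R]
    [DecidableEq n] (B : Matrix n n R) (c : R) :
    (1 - c • B) ⊗ₖ B + B ⊗ₖ (1 - c • B) = 1 ⊗ₖ B + B ⊗ₖ 1 - (2 * c) • (B ⊗ₖ B) := by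
  ext ⟨i, j⟩ ⟨k, l⟩
  simp only [add_apply, sub_apply, smul_apply, kronecker_apply, smul_eq_mul]
  ring

theorem Matrix.IsHermitian.posDef_one_sub_smul {n : Type*} [Fintype n] [DecidableEq n]
    {B : Matrix n n ℝ} (hB : B.IsHermitian) {L t : ℝ}
    (hBL : ∀ x : EuclideanSpace ℝ n, ⟪x, toEuclideanLin B x⟫ ≤ L * ‖x‖ ^ 2)
    (ht : 0 ≤ t) (htL : t * L < 1) : (1 - t • B).PosDef := by
  refine posDef_iff_dotProduct_mulVec.mpr
    ⟨isHermitian_one.sub (hB.smul (IsSelfAdjoint.all t)), fun x hx => ?_⟩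
  have hxx : 0 < x ⬝ᵥ x := by simpa using dotProduct_star_self_pos_iff.mpr hx
  have hxBx : x ⬝ᵥ (B *ᵥ x) ≤ L * (x ⬝ᵥ x) := by
    have h := hBL (WithLp.toLp 2 x)
    rwa [← real_inner_self_eq_norm_sq, toLpLin_toLp, toLin'_apply,
      EuclideanSpace.inner_toLp_toLp, EuclideanSpace.inner_toLp_toLp, star_trivial,
      dotProduct_comm] at h
  have : t * (x ⬝ᵥ (B *ᵥ x)) < x ⬝ᵥ x := by nlinarith
  simpa [sub_mulVec, smul_mulVec, dotProduct_sub] using this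

/-- If `B` is symmetric positive definite with `⟨x, Bx⟩ ≤ L ‖x‖²`, `0 < α < 2/L` and
`β ∈ [0,1)`, then `I ⊗ B + B ⊗ I - α(1-β)² (B ⊗ B)` is (symmetric) positive definite;
in particular it is invertible. -/
theorem stmt7 {d : ℕ} (B : Matrix (Fin d) (Fin d) ℝ) (hB : B.PosDef) (L : ℝ) (hL : 0 < L)
    (hBL : ∀ x : EuclideanSpace ℝ (Fin d), ⟪x, Matrix.toEuclideanLin B x⟫ ≤ L * ‖x‖ ^ 2)
    (α : ℝ) (hα : α ∈ Set.Ioo 0 (2 / L)) (β : ℝ) (hβ : β ∈ Set.Ico (0 : ℝ) 1) :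
    ((1 : Matrix (Fin d) (Fin d) ℝ) ⊗ₖ B + B ⊗ₖ (1 : Matrix (Fin d) (Fin d) ℝ)
        - (α * (1 - β) ^ 2) • (B ⊗ₖ B)).PosDef ∧
      IsUnit ((1 : Matrix (Fin d) (Fin d) ℝ) ⊗ₖ B + B ⊗ₖ (1 : Matrix (Fin d) (Fin d) ℝ)
        - (α * (1 - β) ^ 2) • (B ⊗ₖ B)) := by
  obtain ⟨hα0, hαL⟩ := hα
  obtain ⟨hβ0, hβ1⟩ := hβ
  set c := α * (1 - β) ^ 2
  have hc : 0 ≤ c / 2 := by positivity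
  have hcL : c / 2 * L < 1 := by
    have hc_le : c ≤ α := mul_le_of_le_one_right hα0.le (by nlinarith)
    have : α * L < 2 := (lt_div_iff₀ hL).mp hαL
    nlinarith
  have hA := hB.isHermitian.posDef_one_sub_smul hBL hc hcL
  have hM := (hA.kronecker hB).add (hB.kronecker hA)
  rw [one_sub_smul_kronecker_add_kronecker_one_sub_smul, mul_div_cancel₀ c two_ne_zero] at hM
  exact ⟨hM, hM.isUnit⟩
end

section
/- Let T be a real n×n matrix, c ∈ ℝⁿ, and let ν be a Borel probability measure on ℝⁿ with ∫‖w‖² dν(w) < ∞ and ∫ w dν(w) = 0; set S := ∫ w wᵀ dν(w). Let π be a Borel probability measure on ℝⁿ with ∫‖z‖² dπ(z) < ∞ such that the pushforward of π ⊗ ν under (z, w) ↦ T z + c + w equals π, and let m := ∫ z dπ(z) and Σ := ∫ (z − m)(z − m)ᵀ dπ(z). Then Σ = T Σ Tᵀ + S. -/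
open Matrix MeasureTheory ProbabilityTheory

/-! Since `(z, w) ↦ T z + c + w` pushes `π ⊗ ν` forward to `π`, every coordinate covariance under
`π` is a covariance under `π ⊗ ν` of two sums `X z + Y w` with square-integrable summands.
Independence of the factors of a product measure kills the cross terms; the affine part then
contributes `T Σ Tᵀ` (the shift `c` drops out) and the noise its covariance, which is `S` because
`ν` is centred. -/

section ProdCovariance

variable {Ω Ω' : Type*} {mΩ : MeasurableSpace Ω} {mΩ' : MeasurableSpace Ω'}
  {μ : Measure Ω} {ν : Measure Ω'}

lemma covariance_comp_fst_prod [IsProbabilityMeasure ν] {X Y : Ω → ℝ}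
    (hX : AEStronglyMeasurable X μ)
    (hY : AEStronglyMeasurable Y μ) :
    cov[fun p : Ω × Ω' ↦ X p.1, fun p ↦ Y p.1; μ.prod ν] = cov[X, Y; μ] := by
  rw [← covariance_map_fun (by rwa [Measure.map_fst_prod, measure_univ, one_smul])
    (by rwa [Measure.map_fst_prod, measure_univ, one_smul]) measurable_fst.aemeasurable,
    Measure.map_fst_prod, measure_univ, one_smul]

lemma covariance_comp_snd_prod [IsProbabilityMeasure μ] [SFinite ν] {X Y : Ω' → ℝ}
    (hX : AEStronglyMeasurable X ν)
    (hY : AEStronglyMeasurable Y ν) :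
    cov[fun p : Ω × Ω' ↦ X p.2, fun p ↦ Y p.2; μ.prod ν] = cov[X, Y; ν] := by
  rw [← covariance_map_fun (by rwa [Measure.map_snd_prod, measure_univ, one_smul])
    (by rwa [Measure.map_snd_prod, measure_univ, one_smul]) measurable_snd.aemeasurable,
    Measure.map_snd_prod, measure_univ, one_smul]

lemma covariance_add_prod [IsProbabilityMeasure μ] [IsProbabilityMeasure ν] {X X' : Ω → ℝ}
    {Y Y' : Ω' → ℝ} (hX : MemLp X 2 μ) (hX' : MemLp X' 2 μ) (hY : MemLp Y 2 ν)
    (hY' : MemLp Y' 2 ν) :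
    cov[fun p : Ω × Ω' ↦ X p.1 + Y p.2, fun p ↦ X' p.1 + Y' p.2; μ.prod ν] =
      cov[X, X'; μ] + cov[Y, Y'; ν] := by
  have hX₁ := hX.comp_fst ν
  have hX'₁ := hX'.comp_fst ν
  have hY₂ := hY.comp_snd μ
  have hY'₂ := hY'.comp_snd μ
  change cov[(fun p : Ω × Ω' ↦ X p.1) + fun p ↦ Y p.2,
    (fun p : Ω × Ω' ↦ X' p.1) + fun p ↦ Y' p.2; μ.prod ν] = _
  rw [covariance_add_left hX₁ hY₂ (hX'₁.add hY'₂), covariance_add_right hX₁ hX'₁ hY'₂,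
    covariance_add_right hY₂ hX'₁ hY'₂, covariance_fst_snd_prod hX hY',
    covariance_comm (fun p : Ω × Ω' ↦ Y p.2), covariance_fst_snd_prod hX' hY,
    covariance_comp_fst_prod hX.1 hX'.1, covariance_comp_snd_prod hY.1 hY'.1]
  simp

end ProdCovariance

lemma memLp_two_id_of_lintegral_nnnorm_sq_lt_top {E : Type*} [NormedAddCommGroup E]
    [MeasurableSpace E] [OpensMeasurableSpace E] [SecondCountableTopology E] {μ : Measure E}
    (h : ∫⁻ z, (‖z‖₊ : ENNReal) ^ 2 ∂μ < ⊤) : MemLp id 2 μ := by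
  refine ⟨aestronglyMeasurable_id, ?_⟩
  rw [eLpNorm_lt_top_iff_lintegral_rpow_enorm_lt_top two_ne_zero ENNReal.ofNat_ne_top]
  simpa [ENNReal.rpow_natCast, enorm_eq_nnnorm] using h

section CovarianceMatrix

variable {ι : Type*} [Fintype ι] {μ : Measure (EuclideanSpace ℝ ι)}

noncomputable def covarianceMatrix (μ : Measure (EuclideanSpace ℝ ι)) : Matrix ι ι ℝ :=
  Matrix.of fun i j ↦ cov[fun z ↦ z i, fun z ↦ z j; μ]

lemma covarianceMatrix_apply (hμ : Integrable id μ) (i j : ι) :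
    covarianceMatrix μ i j =
      ∫ z, (z i - (∫ z, z ∂μ) i) * (z j - (∫ z, z ∂μ) j) ∂μ := by
  have hmean : ∀ k, (∫ z, z ∂μ) k = ∫ z, z k ∂μ :=
    eval_integral_piLp (f := fun z ↦ z) hμ.eval_piLp
  simp only [covarianceMatrix, of_apply, covariance, hmean]

lemma covarianceMatrix_apply_of_integral_eq_zero (hμ : Integrable id μ)
    (h0 : ∫ z, z ∂μ = 0) (i j : ι) :
    covarianceMatrix μ i j = ∫ z, z i * z j ∂μ := by
  simp [covarianceMatrix_apply hμ, h0]

lemma covariance_toEuclideanLin_add_const [DecidableEq ι] [IsProbabilityMeasure μ]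
    (hμ : MemLp id 2 μ) (T : Matrix ι ι ℝ) (c : EuclideanSpace ℝ ι) (i j : ι) :
    cov[fun z ↦ (toEuclideanLin T z + c) i, fun z ↦ (toEuclideanLin T z + c) j; μ] =
      (T * covarianceMatrix μ * Tᵀ) i j := by
  have hcoord : ∀ k, MemLp (fun z : EuclideanSpace ℝ ι ↦ z k) 2 μ := hμ.eval_piLp
  have hexpand : ∀ i, (fun z ↦ (toEuclideanLin T z + c) i) =
      fun z : EuclideanSpace ℝ ι ↦ (∑ k, T i k * z k) + c i := by
    intro i; funext z
    simp [toLpLin_apply, mulVec, dotProduct]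
  have hsum : ∀ i, MemLp (fun z : EuclideanSpace ℝ ι ↦ ∑ k, T i k * z k) 2 μ :=
    fun i ↦ memLp_finsetSum _ fun k _ ↦ (hcoord k).const_mul _
  rw [hexpand, hexpand, covariance_add_const_left ((hsum i).integrable one_le_two),
    covariance_add_const_right ((hsum j).integrable one_le_two),
    covariance_fun_sum_fun_sum (fun k ↦ (hcoord k).const_mul _)
      (fun l ↦ (hcoord l).const_mul _)]
  simp only [covariance_const_mul_left, covariance_const_mul_right, mul_apply, transpose_apply,
    covarianceMatrix, of_apply, Finset.sum_mul]
  rw [Finset.sum_comm]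
  exact Finset.sum_congr rfl fun l _ ↦ Finset.sum_congr rfl fun k _ ↦ by ring

lemma covarianceMatrix_eq_of_map_affine_prod_eq_self [DecidableEq ι]
    {π ν : Measure (EuclideanSpace ℝ ι)} [IsProbabilityMeasure π] [IsProbabilityMeasure ν]
    (hπ : MemLp id 2 π) (hν : MemLp id 2 ν) (T : Matrix ι ι ℝ) (c : EuclideanSpace ℝ ι)
    (hstat : (π.prod ν).map (fun p ↦ toEuclideanLin T p.1 + c + p.2) = π) :
    covarianceMatrix π = T * covarianceMatrix π * Tᵀ + covarianceMatrix ν := by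
  have hA : MemLp (fun z ↦ toEuclideanLin T z + c) 2 π :=
    ((toEuclideanLin T).toContinuousLinearMap.comp_memLp' hπ).add (memLp_const c)
  ext i j
  calc covarianceMatrix π i j
      = cov[fun p ↦ (toEuclideanLin T p.1 + c + p.2) i,
          fun p ↦ (toEuclideanLin T p.1 + c + p.2) j; π.prod ν] := by
        change cov[fun z ↦ z i, fun z ↦ z j; π] = _
        conv_lhs => rw [← hstat]
        exact covariance_map_fun (by fun_prop) (by fun_prop) (by fun_prop)
    _ = cov[fun z ↦ (toEuclideanLin T z + c) i, fun z ↦ (toEuclideanLin T z + c) j; π] +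
          cov[fun w ↦ w i, fun w ↦ w j; ν] :=
        covariance_add_prod (hA.eval_piLp i) (hA.eval_piLp j) (hν.eval_piLp i) (hν.eval_piLp j)
    _ = (T * covarianceMatrix π * Tᵀ + covarianceMatrix ν) i j := by
        rw [covariance_toEuclideanLin_add_const hπ]
        rfl

end CovarianceMatrix

/-- If `π` is an invariant law (with finite second moment) of the random affine recursion
`z ↦ T z + c + w`, where the noise `w ∼ ν` has finite second moment, mean zero and
covariance `S = ∫ w wᵀ dν`, then the stationary covariance
`Σ = ∫ (z - m)(z - m)ᵀ dπ` satisfies the Stein equation `Σ = T Σ Tᵀ + S`. -/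
theorem stmt11 {n : ℕ} (T : Matrix (Fin n) (Fin n) ℝ) (c : EuclideanSpace ℝ (Fin n))
    (ν π : Measure (EuclideanSpace ℝ (Fin n)))
    [IsProbabilityMeasure ν] [IsProbabilityMeasure π]
    (hν2 : ∫⁻ w, (‖w‖₊ : ENNReal) ^ 2 ∂ν < ⊤) (hν0 : (∫ w, w ∂ν) = 0)
    (hπ2 : ∫⁻ z, (‖z‖₊ : ENNReal) ^ 2 ∂π < ⊤)
    (hstat : Measure.map
        (fun p : EuclideanSpace ℝ (Fin n) × EuclideanSpace ℝ (Fin n) =>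
          Matrix.toEuclideanLin T p.1 + c + p.2) (π.prod ν) = π) :
    let m : EuclideanSpace ℝ (Fin n) := ∫ z, z ∂π
    let S : Matrix (Fin n) (Fin n) ℝ := Matrix.of fun i j => ∫ w, w i * w j ∂ν
    let Sig : Matrix (Fin n) (Fin n) ℝ :=
      Matrix.of fun i j => ∫ z, (z i - m i) * (z j - m j) ∂π
    Sig = T * Sig * Tᵀ + S := by
  intro m S Sig
  have hπ := memLp_two_id_of_lintegral_nnnorm_sq_lt_top hπ2
  have hν := memLp_two_id_of_lintegral_nnnorm_sq_lt_top hν2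
  have hSig : Sig = covarianceMatrix π := by
    ext i j
    exact (covarianceMatrix_apply (hπ.integrable one_le_two) i j).symm
  have hS : S = covarianceMatrix ν := by
    ext i j
    exact (covarianceMatrix_apply_of_integral_eq_zero (hν.integrable one_le_two) hν0 i j).symm
  rw [hSig, hS]
  exact covarianceMatrix_eq_of_map_affine_prod_eq_self hπ hν T c hstat
end

section
/- Let μ be a compactly supported Borel probability measure on ℝ^d and σ > 0. Define p : ℝ^d → ℝ by p(y) = ∫ exp(−‖y − x‖²/(2σ²)) dμ(x). Then p(y) > 0 for all y, p is differentiable, and for every y ∈ ℝ^d, σ²·∇p(y) = ∫ (x − y)·exp(−‖y − x‖²/(2σ²)) dμ(x); equivalently, the expected denoised sample satisfies y + σ²·∇(log p)(y) = (1/p(y))·∫ x·exp(−‖y − x‖²/(2σ²)) dμ(x). -/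
/-!
Every quantity is an integral against `μ` of the Gaussian kernel
`k(y, x) = exp(-‖y - x‖²/(2σ²))` or of `k(y, x) • (x - y)`. Both integrands are bounded
uniformly in `y` (the second by `σ`, since `t e^{-t²/(2σ²)} ≤ σ`), so on a finite measure one
may differentiate under the integral sign, using `∇_y k(y, x) = σ⁻² k(y, x) • (x - y)`.
The formula for `∇ log p` is then the chain rule.
-/

open MeasureTheory Filter

lemma mul_exp_neg_sq_div_le {σ : ℝ} (hσ : 0 < σ) (t : ℝ) :
    t * Real.exp (-t ^ 2 / (2 * σ ^ 2)) ≤ σ := by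
  have hexp : 1 + t ^ 2 / (2 * σ ^ 2) ≤ Real.exp (t ^ 2 / (2 * σ ^ 2)) := by
    linarith [Real.add_one_le_exp (t ^ 2 / (2 * σ ^ 2))]
  have hσt : t ≤ σ * (1 + t ^ 2 / (2 * σ ^ 2)) := by
    rw [show σ * (1 + t ^ 2 / (2 * σ ^ 2)) = t + ((t - σ) ^ 2 + σ ^ 2) / (2 * σ) by
      field_simp; ring]
    have : 0 ≤ ((t - σ) ^ 2 + σ ^ 2) / (2 * σ) := by positivity
    linarith
  rw [neg_div, Real.exp_neg, ← div_eq_mul_inv, div_le_iff₀ (Real.exp_pos _)]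
  exact hσt.trans (mul_le_mul_of_nonneg_left hexp hσ.le)

lemma HasGradientAt.log {F : Type*} [NormedAddCommGroup F] [InnerProductSpace ℝ F]
    [CompleteSpace F] {f : F → ℝ} {f' x : F} (hf : HasGradientAt f f' x) (hx : f x ≠ 0) :
    HasGradientAt (fun y => Real.log (f y)) ((f x)⁻¹ • f') x := by
  rw [hasGradientAt_iff_hasFDerivAt, map_smul]
  exact hf.hasFDerivAt.log hx

section GaussianKernel

variable {E : Type*} [NormedAddCommGroup E]

noncomputable def gaussianKernel (σ : ℝ) (y x : E) : ℝ :=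
  Real.exp (-‖y - x‖ ^ 2 / (2 * σ ^ 2))

lemma gaussianKernel_pos (σ : ℝ) (y x : E) : 0 < gaussianKernel σ y x := Real.exp_pos _

lemma gaussianKernel_le_one (σ : ℝ) (y x : E) : gaussianKernel σ y x ≤ 1 :=
  Real.exp_le_one_iff.2 (div_nonpos_of_nonpos_of_nonneg (by simp) (by positivity))

lemma continuous_gaussianKernel (σ : ℝ) (y : E) : Continuous (gaussianKernel σ y) := by
  unfold gaussianKernel; fun_prop

lemma norm_gaussianKernel_smul_sub_le [NormedSpace ℝ E] {σ : ℝ} (hσ : 0 < σ) (y x : E) :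
    ‖gaussianKernel σ y x • (x - y)‖ ≤ σ := by
  rw [norm_smul, Real.norm_of_nonneg (gaussianKernel_pos σ y x).le, norm_sub_rev, mul_comm]
  exact mul_exp_neg_sq_div_le hσ _

lemma hasGradientAt_gaussianKernel [InnerProductSpace ℝ E] [CompleteSpace E]
    (σ : ℝ) (x y : E) :
    HasGradientAt (fun y' => gaussianKernel σ y' x)
      ((σ ^ 2)⁻¹ • gaussianKernel σ y x • (x - y)) y := by
  have hsq : HasFDerivAt (fun y' : E => ‖y' - x‖ ^ 2) (2 • innerSL ℝ (y - x)) y := by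
    simpa using ((hasFDerivAt_id y).sub_const x).norm_sq
  have hexp := (hsq.const_mul (-(2 * σ ^ 2)⁻¹)).exp
  rw [hasGradientAt_iff_hasFDerivAt]
  refine (hexp.congr_fderiv ?_).congr_of_eventuallyEq
    (Eventually.of_forall fun y' => by simp only [gaussianKernel]; ring_nf)
  ext w
  simp only [InnerProductSpace.toDual_apply_apply, gaussianKernel, FunLike.coe_smul,
    Pi.smul_apply, smul_eq_mul, innerSL_apply_apply, real_inner_smul_left, inner_sub_left]
  ring_nf

section Integral

variable [MeasurableSpace E] [OpensMeasurableSpace E] {μ : Measure E} [IsFiniteMeasure μ]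
  {σ : ℝ}

lemma integrable_gaussianKernel (y : E) : Integrable (gaussianKernel σ y) μ :=
  (integrable_const (1 : ℝ)).mono' (continuous_gaussianKernel σ y).aestronglyMeasurable
    (Eventually.of_forall fun x => by
      rw [Real.norm_of_nonneg (gaussianKernel_pos σ y x).le]; exact gaussianKernel_le_one σ y x)

lemma integral_gaussianKernel_pos [NeZero μ] (y : E) : 0 < ∫ x, gaussianKernel σ y x ∂μ :=
  integral_exp_pos (integrable_gaussianKernel y)

variable [InnerProductSpace ℝ E] [SecondCountableTopology E]

lemma integrable_gaussianKernel_smul_sub (hσ : 0 < σ) (y : E) :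
    Integrable (fun x => gaussianKernel σ y x • (x - y)) μ :=
  (integrable_const σ).mono'
    ((continuous_gaussianKernel σ y).smul
      (continuous_id.sub continuous_const)).aestronglyMeasurable
    (Eventually.of_forall fun x => norm_gaussianKernel_smul_sub_le hσ y x)

variable [CompleteSpace E]

lemma integral_gaussianKernel_smul_sub (hσ : 0 < σ) (y : E) :
    ∫ x, gaussianKernel σ y x • (x - y) ∂μ
      = ∫ x, gaussianKernel σ y x • x ∂μ - (∫ x, gaussianKernel σ y x ∂μ) • y := by
  have hy : Integrable (fun x => gaussianKernel σ y x • y) μ :=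
    (integrable_gaussianKernel y).smul_const y
  have hx : Integrable (fun x => gaussianKernel σ y x • x) μ :=
    ((integrable_gaussianKernel_smul_sub hσ y).add hy).congr
      (Eventually.of_forall fun x => by simp [← smul_add])
  simp_rw [smul_sub]
  rw [integral_sub hx hy, integral_smul_const]

lemma hasGradientAt_integral_gaussianKernel (hσ : 0 < σ) (y : E) :
    HasGradientAt (fun y' => ∫ x, gaussianKernel σ y' x ∂μ)
      ((σ ^ 2)⁻¹ • ∫ x, gaussianKernel σ y x • (x - y) ∂μ) y := by
  let toDual := InnerProductSpace.toDual ℝ E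
  have hderiv := hasFDerivAt_integral_of_dominated_of_fderiv_le (μ := μ)
    (F' := fun y' x => toDual ((σ ^ 2)⁻¹ • gaussianKernel σ y' x • (x - y')))
    (bound := fun _ => (σ ^ 2)⁻¹ * σ) univ_mem
    (Eventually.of_forall fun y' => (continuous_gaussianKernel σ y').aestronglyMeasurable)
    (integrable_gaussianKernel y)
    ((toDual.continuous.comp (continuous_const.smul ((continuous_gaussianKernel σ y).smul
      (continuous_id.sub continuous_const)))).aestronglyMeasurable)
    (Eventually.of_forall fun x y' _ => by
      rw [toDual.norm_map, norm_smul, Real.norm_of_nonneg (by positivity)]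
      exact mul_le_mul_of_nonneg_left (norm_gaussianKernel_smul_sub_le hσ y' x) (by positivity))
    (integrable_const _)
    (Eventually.of_forall fun x y' _ => (hasGradientAt_gaussianKernel σ x y').hasFDerivAt)
  have hcomm : ∫ x, toDual ((σ ^ 2)⁻¹ • gaussianKernel σ y x • (x - y)) ∂μ
      = toDual (∫ x, (σ ^ 2)⁻¹ • gaussianKernel σ y x • (x - y) ∂μ) :=
    toDual.toLinearIsometry.toContinuousLinearMap.integral_comp_comm
      ((integrable_gaussianKernel_smul_sub (μ := μ) hσ y).smul ((σ ^ 2)⁻¹))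
  rw [hasGradientAt_iff_hasFDerivAt, ← integral_smul, ← hcomm]
  exact hderiv

end Integral

end GaussianKernel

theorem stmt13_general {d : ℕ} (μ : Measure (EuclideanSpace ℝ (Fin d))) [IsProbabilityMeasure μ]
    (σ : ℝ) (hσ : 0 < σ) :
    let p : EuclideanSpace ℝ (Fin d) → ℝ :=
      fun y => ∫ x, Real.exp (-‖y - x‖ ^ 2 / (2 * σ ^ 2)) ∂μ
    (∀ y, 0 < p y) ∧ Differentiable ℝ p ∧
      (∀ y, σ ^ 2 • gradient p y
          = ∫ x, Real.exp (-‖y - x‖ ^ 2 / (2 * σ ^ 2)) • (x - y) ∂μ) ∧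
      (∀ y, y + σ ^ 2 • gradient (fun y' => Real.log (p y')) y
          = (p y)⁻¹ • ∫ x, Real.exp (-‖y - x‖ ^ 2 / (2 * σ ^ 2)) • x ∂μ) := by
  intro p
  have hσ2 : σ ^ 2 ≠ 0 := by positivity
  have hpos : ∀ y, 0 < p y := integral_gaussianKernel_pos
  have hgrad :
      ∀ y, HasGradientAt p ((σ ^ 2)⁻¹ • ∫ x, gaussianKernel σ y x • (x - y) ∂μ) y :=
    hasGradientAt_integral_gaussianKernel hσ
  refine ⟨hpos, fun y => (hgrad y).differentiableAt, fun y => ?_, fun y => ?_⟩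
  · rw [(hgrad y).gradient, smul_inv_smul₀ hσ2]
    rfl
  · rw [((hgrad y).log (hpos y).ne').gradient, smul_comm, smul_inv_smul₀ hσ2,
      integral_gaussianKernel_smul_sub hσ, smul_sub]
    change y + ((p y)⁻¹ • ∫ x, gaussianKernel σ y x • x ∂μ - (p y)⁻¹ • p y • y)
      = _
    rw [inv_smul_smul₀ (hpos y).ne', add_sub_cancel]
    rfl

/-- Tweedie's formula / Empirical Bayes mean. For a compactly supported data distribution
`μ` and `σ > 0`, the (unnormalized) Gaussian-smoothed density
`p(y) = ∫ exp(-‖y - x‖²/(2σ²)) dμ(x)` is positive and differentiable, with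
`σ² ∇p(y) = ∫ (x - y) exp(-‖y - x‖²/(2σ²)) dμ(x)`; equivalently
`y + σ² ∇(log p)(y) = (1/p(y)) ∫ x exp(-‖y - x‖²/(2σ²)) dμ(x)`. -/
theorem stmt13 {d : ℕ} (μ : Measure (EuclideanSpace ℝ (Fin d))) [IsProbabilityMeasure μ]
    (hμ : ∃ K : Set (EuclideanSpace ℝ (Fin d)), IsCompact K ∧ μ Kᶜ = 0)
    (σ : ℝ) (hσ : 0 < σ) :
    let p : EuclideanSpace ℝ (Fin d) → ℝ :=
      fun y => ∫ x, Real.exp (-‖y - x‖ ^ 2 / (2 * σ ^ 2)) ∂μ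
    (∀ y, 0 < p y) ∧ Differentiable ℝ p ∧
      (∀ y, σ ^ 2 • gradient p y
          = ∫ x, Real.exp (-‖y - x‖ ^ 2 / (2 * σ ^ 2)) • (x - y) ∂μ) ∧
      (∀ y, y + σ ^ 2 • gradient (fun y' => Real.log (p y')) y
          = (p y)⁻¹ • ∫ x, Real.exp (-‖y - x‖ ^ 2 / (2 * σ ^ 2)) • x ∂μ) :=
  stmt13_general μ σ hσ
end

section
/- Let a, α ∈ ℝ with 1 + α a ≠ 0, set r := (1 − α a)/(1 + α a) and β := r². Then the heavy-ball characteristic quadratic satisfies λ² − (1 + β − α(1−β) a)·λ + β = (λ − r)² for all λ ∈ ℝ, i.e., this quadratic has the double root r. Moreover, if 0 < μ ≤ a and α > 0, then r ≤ (1 − α μ)/(1 + α μ). -/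
/-- With the adaptive momentum choice `β = r²`, `r = (1 - αa)/(1 + αa)`, the heavy-ball
characteristic quadratic `λ² - (1 + β - α(1-β)a) λ + β` equals `(λ - r)²` (double root `r`);
moreover if `0 < μ ≤ a` and `α > 0` then `r ≤ (1 - αμ)/(1 + αμ)`. -/
theorem stmt16 (a α : ℝ) (h : 1 + α * a ≠ 0) :
    let r : ℝ := (1 - α * a) / (1 + α * a)
    let β : ℝ := r ^ 2
    (∀ lam : ℝ, lam ^ 2 - (1 + β - α * (1 - β) * a) * lam + β = (lam - r) ^ 2) ∧
      ∀ μ : ℝ, 0 < μ → μ ≤ a → 0 < α → r ≤ (1 - α * μ) / (1 + α * μ) := by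
  intro r β
  constructor
  · intro lam
    show lam ^ 2 - (1 + ((1 - α * a) / (1 + α * a)) ^ 2 -
        α * (1 - ((1 - α * a) / (1 + α * a)) ^ 2) * a) * lam +
        ((1 - α * a) / (1 + α * a)) ^ 2 = (lam - (1 - α * a) / (1 + α * a)) ^ 2
    field_simp
    ring
  · intro μ hμ hμa hα
    show (1 - α * a) / (1 + α * a) ≤ (1 - α * μ) / (1 + α * μ)
    have h1 : (0:ℝ) < 1 + α * μ := by nlinarith
    have h2 : (0:ℝ) < 1 + α * a := by nlinarith
    rw [div_le_div_iff₀ h2 h1]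
    nlinarith
end
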